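/- arXiv:2410.19615 — 2 statements merged into one kernel-verified Lean document; each statement's English description precedes it below -/
import Mathlib

section
/- If a continuously differentiable function d : ℝ≥0 → ℝ^k satisfies that d′(t) → 0 as t → ∞ and d is bounded, and the observation error ē(t) satisfies an ISS estimate with input d′, while the regulation error x̃(t) satisfies an ISS estimate with input ε(t) where ‖ε(t)‖ ≤ c₁‖ē(t)‖ for a constant c₁ ≥ 0, then the tracking error ỹ(t) = C x̃(t) converges to 0 as t → ∞. -/
/-!
An ISS estimate turns a vanishing input into a vanishing state: restart the estimate at a time
`s` after which the input is small, so that the gain term is small by continuity of `γ` at `0`,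
and then wait until the transient `β ‖x s‖ (t - s)` is small as well. Applied to the observer
error (input `d'`) this gives `ē → 0`, hence `ε → 0`, and applied again to the regulation error
it gives `x̃ → 0`, which a matrix preserves.
-/

open Filter Set Topology

section ISS

variable {E F : Type*} [SeminormedAddCommGroup E] [SeminormedAddCommGroup F]

lemma iSup_Icc_norm_mem_Icc {u : ℝ → F} {s δ : ℝ} (hδ : 0 ≤ δ)
    (hu : ∀ τ, s ≤ τ → ‖u τ‖ ≤ δ) (t : ℝ) :
    (⨆ τ ∈ Icc s t, ‖u τ‖) ∈ Icc 0 δ :=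
  ⟨Real.iSup_nonneg fun _ => Real.iSup_nonneg fun _ => norm_nonneg _,
    Real.iSup_le (fun τ => Real.iSup_le (fun hτ => hu τ hτ.1) hδ) hδ⟩

lemma exists_forall_gain_iSup_Icc_norm_lt {u : ℝ → F} {γ : ℝ → ℝ}
    (hu : Tendsto u atTop (𝓝 0)) (hγ : ContinuousWithinAt γ (Ici 0) 0) (hγ_zero : γ 0 = 0)
    {η : ℝ} (hη : 0 < η) :
    ∃ s, 0 ≤ s ∧ ∀ t, γ (⨆ τ ∈ Icc s t, ‖u τ‖) < η := by
  have hγ_small : ∀ᶠ r in 𝓝[≥] 0, γ r < η := by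
    rw [ContinuousWithinAt, hγ_zero] at hγ
    exact hγ (Iio_mem_nhds hη)
  obtain ⟨δ, hδ, hδγ⟩ := mem_nhdsGE_iff_exists_Icc_subset.1 hγ_small
  obtain ⟨s, hs⟩ := eventually_atTop.1
    ((tendsto_zero_iff_norm_tendsto_zero.1 hu).eventually (eventually_le_nhds hδ))
  exact ⟨max s 0, le_max_right _ _, fun t =>
    hδγ (iSup_Icc_norm_mem_Icc hδ.le (fun τ hτ => hs τ (le_of_max_le_left hτ)) t)⟩

theorem tendsto_zero_of_iss_of_tendsto_zero {x : ℝ → E} {u : ℝ → F}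
    {β : ℝ → ℝ → ℝ} {γ : ℝ → ℝ}
    (hβ : ∀ r, 0 ≤ r → Tendsto (β r) atTop (𝓝 0))
    (hγ : ContinuousWithinAt γ (Ici 0) 0) (hγ_zero : γ 0 = 0)
    (hISS : ∀ s t, 0 ≤ s → s ≤ t → ‖x t‖ ≤ β ‖x s‖ (t - s) + γ (⨆ τ ∈ Icc s t, ‖u τ‖))
    (hu : Tendsto u atTop (𝓝 0)) :
    Tendsto x atTop (𝓝 0) := by
  refine tendsto_zero_iff_norm_tendsto_zero.2 (tendsto_order.2
    ⟨fun a ha => Eventually.of_forall fun t => ha.trans_le (norm_nonneg _), fun η hη => ?_⟩)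
  obtain ⟨s, hs, hγs⟩ := exists_forall_gain_iSup_Icc_norm_lt hu hγ hγ_zero (half_pos hη)
  have hβs : ∀ᶠ t in atTop, β ‖x s‖ (t - s) < η / 2 :=
    ((hβ _ (norm_nonneg _)).comp (tendsto_atTop_add_const_right atTop (-s) tendsto_id)).eventually
      (eventually_lt_nhds (half_pos hη))
  filter_upwards [hβs, eventually_ge_atTop s] with t hβt hst
  linarith [hISS s t hs hst, hγs t]

end ISS

theorem iss_cascade_tracking_error_converges_general (n p k q : ℕ)
    (d' : ℝ → EuclideanSpace ℝ (Fin k))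
    (hd'_lim : Tendsto d' atTop (nhds 0))
    (ebar : ℝ → EuclideanSpace ℝ (Fin p))
    (xt : ℝ → EuclideanSpace ℝ (Fin n))
    (ε : ℝ → EuclideanSpace ℝ (Fin n))
    (β₁ : ℝ → ℝ → ℝ) (γ₁ : ℝ → ℝ) (β₂ : ℝ → ℝ → ℝ) (γ₂ : ℝ → ℝ)
    -- class-KL and class-K properties
    (hβ₁_lim : ∀ r : ℝ, 0 ≤ r → Tendsto (fun t => β₁ r t) atTop (nhds 0))
    (hγ₁_cont : ContinuousOn γ₁ (Ici 0))
    (hγ₁_zero : γ₁ 0 = 0)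
    (hβ₂_lim : ∀ r : ℝ, 0 ≤ r → Tendsto (fun t => β₂ r t) atTop (nhds 0))
    (hγ₂_cont : ContinuousOn γ₂ (Ici 0))
    (hγ₂_zero : γ₂ 0 = 0)
    -- ISS estimates (standard, from any initial time s ≤ t)
    (hISS₁ : ∀ s t : ℝ, 0 ≤ s → s ≤ t →
      ‖ebar t‖ ≤ β₁ ‖ebar s‖ (t - s) + γ₁ (⨆ τ ∈ Icc s t, ‖d' τ‖))
    (hISS₂ : ∀ s t : ℝ, 0 ≤ s → s ≤ t →
      ‖xt t‖ ≤ β₂ ‖xt s‖ (t - s) + γ₂ (⨆ τ ∈ Icc s t, ‖ε τ‖))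
    (c₁ : ℝ)
    (hε : ∀ t : ℝ, 0 ≤ t → ‖ε t‖ ≤ c₁ * ‖ebar t‖)
    (C : Matrix (Fin q) (Fin n) ℝ) :
    Tendsto (fun t => (show EuclideanSpace ℝ (Fin q) from WithLp.toLp 2 (C.mulVec (xt t))))
      atTop (nhds 0) := by
  have hebar : Tendsto ebar atTop (𝓝 0) :=
    tendsto_zero_of_iss_of_tendsto_zero hβ₁_lim (hγ₁_cont 0 self_mem_Ici) hγ₁_zero hISS₁ hd'_lim
  have hε_lim : Tendsto ε atTop (𝓝 0) := by
    refine squeeze_zero_norm' ?_ (by simpa using (tendsto_norm_zero.comp hebar).const_mul c₁)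
    filter_upwards [eventually_ge_atTop 0] with t ht using hε t ht
  have hxt : Tendsto xt atTop (𝓝 0) :=
    tendsto_zero_of_iss_of_tendsto_zero hβ₂_lim (hγ₂_cont 0 self_mem_Ici) hγ₂_zero hISS₂ hε_lim
  have hC : Continuous fun v : EuclideanSpace ℝ (Fin n) =>
      (WithLp.toLp 2 (C.mulVec v) : EuclideanSpace ℝ (Fin q)) := by
    fun_prop
  exact (hC.tendsto' 0 0 (by simp)).comp hxt

/-- cascade of ISS estimates: if d′ → 0, the observation error ē is ISS
w.r.t. d′, the regulation error x̃ is ISS w.r.t. ε with ‖ε(t)‖ ≤ c₁‖ē(t)‖, then the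
tracking error ỹ = C x̃ converges to 0. -/
theorem iss_cascade_tracking_error_converges (n p k q : ℕ)
    (d : ℝ → EuclideanSpace ℝ (Fin k)) (d' : ℝ → EuclideanSpace ℝ (Fin k))
    (hd : ∀ t : ℝ, HasDerivAt d (d' t) t) (hd'_cont : Continuous d')
    (hd_bdd : ∃ Dm : ℝ, ∀ t : ℝ, 0 ≤ t → ‖d t‖ ≤ Dm)
    (hd'_lim : Tendsto d' atTop (nhds 0))
    (ebar : ℝ → EuclideanSpace ℝ (Fin p)) (hebar_cont : Continuous ebar)
    (xt : ℝ → EuclideanSpace ℝ (Fin n)) (hxt_cont : Continuous xt)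
    (ε : ℝ → EuclideanSpace ℝ (Fin n))
    (β₁ : ℝ → ℝ → ℝ) (γ₁ : ℝ → ℝ) (β₂ : ℝ → ℝ → ℝ) (γ₂ : ℝ → ℝ)
    -- class-KL and class-K properties
    (hβ₁_mono : ∀ t : ℝ, 0 ≤ t → StrictMonoOn (fun r => β₁ r t) (Ici 0))
    (hβ₁_cont : ∀ t : ℝ, 0 ≤ t → ContinuousOn (fun r => β₁ r t) (Ici 0))
    (hβ₁_zero : ∀ t : ℝ, 0 ≤ t → β₁ 0 t = 0)
    (hβ₁_lim : ∀ r : ℝ, 0 ≤ r → Tendsto (fun t => β₁ r t) atTop (nhds 0))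
    (hγ₁_cont : ContinuousOn γ₁ (Ici 0)) (hγ₁_mono : StrictMonoOn γ₁ (Ici 0))
    (hγ₁_zero : γ₁ 0 = 0)
    (hβ₂_mono : ∀ t : ℝ, 0 ≤ t → StrictMonoOn (fun r => β₂ r t) (Ici 0))
    (hβ₂_cont : ∀ t : ℝ, 0 ≤ t → ContinuousOn (fun r => β₂ r t) (Ici 0))
    (hβ₂_zero : ∀ t : ℝ, 0 ≤ t → β₂ 0 t = 0)
    (hβ₂_lim : ∀ r : ℝ, 0 ≤ r → Tendsto (fun t => β₂ r t) atTop (nhds 0))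
    (hγ₂_cont : ContinuousOn γ₂ (Ici 0)) (hγ₂_mono : StrictMonoOn γ₂ (Ici 0))
    (hγ₂_zero : γ₂ 0 = 0)
    -- ISS estimates (standard, from any initial time s ≤ t)
    (hISS₁ : ∀ s t : ℝ, 0 ≤ s → s ≤ t →
      ‖ebar t‖ ≤ β₁ ‖ebar s‖ (t - s) + γ₁ (⨆ τ ∈ Icc s t, ‖d' τ‖))
    (hISS₂ : ∀ s t : ℝ, 0 ≤ s → s ≤ t →
      ‖xt t‖ ≤ β₂ ‖xt s‖ (t - s) + γ₂ (⨆ τ ∈ Icc s t, ‖ε τ‖))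
    (c₁ : ℝ) (hc₁ : 0 ≤ c₁)
    (hε : ∀ t : ℝ, 0 ≤ t → ‖ε t‖ ≤ c₁ * ‖ebar t‖)
    (C : Matrix (Fin q) (Fin n) ℝ) :
    Tendsto (fun t => (show EuclideanSpace ℝ (Fin q) from WithLp.toLp 2 (C.mulVec (xt t))))
      atTop (nhds 0) :=
  iss_cascade_tracking_error_converges_general n p k q d' hd'_lim ebar xt ε β₁ γ₁ β₂ γ₂ hβ₁_lim
    hγ₁_cont hγ₁_zero hβ₂_lim hγ₂_cont hγ₂_zero hISS₁ hISS₂ c₁ hε C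
end

section
/- For any class-KL function β and any r ≥ 0, the function t ↦ β(r, t) converges to 0 as t → ∞, and for a cascade where ‖e(t)‖ ≤ β(‖e(0)‖, t - s) + γ(sup_{s ≤ τ ≤ t}‖w(τ)‖) holds for all 0 ≤ s ≤ t with w(t) → 0, it follows e(t) → 0. -/
open Filter Set Topology

lemma tendsto_biSup_Icc_nhdsGE_zero {α : Type*} {l : Filter α} {w : ℝ → ℝ}
    (hw_nonneg : ∀ τ, 0 ≤ w τ) (hw : Tendsto w atTop (𝓝 0)) {a b : α → ℝ}
    (ha : Tendsto a l atTop) :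
    Tendsto (fun x => ⨆ τ ∈ Icc (a x) (b x), w τ) l (𝓝[≥] 0) := by
  have hsup_nonneg : ∀ x, 0 ≤ ⨆ τ ∈ Icc (a x) (b x), w τ := fun x =>
    Real.iSup_nonneg fun τ => Real.iSup_nonneg fun _ => hw_nonneg τ
  refine tendsto_nhdsWithin_iff.2 ⟨tendsto_order.2 ⟨fun c hc => ?_, fun c hc => ?_⟩,
    Eventually.of_forall hsup_nonneg⟩
  · exact Eventually.of_forall fun x => hc.trans_le (hsup_nonneg x)
  · obtain ⟨R, hR⟩ := eventually_atTop.1 (hw.eventually (gt_mem_nhds (half_pos hc)))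
    filter_upwards [ha.eventually_ge_atTop R] with x hx
    refine lt_of_le_of_lt ?_ (half_lt_self hc)
    exact Real.iSup_le (fun τ => Real.iSup_le (fun hτ => (hR τ (hx.trans hτ.1)).le)
      (half_pos hc).le) (half_pos hc).le

/-- Apply the estimate on the window `[t/2, t]`: both the transient and the input term vanish. -/
theorem tendsto_zero_of_iss_estimate {E : Type*} [SeminormedAddCommGroup E]
    {β : ℝ → ℝ → ℝ} {γ w : ℝ → ℝ} {e : ℝ → E}
    (hβ : Tendsto (β ‖e 0‖) atTop (𝓝 0)) (hγ : Tendsto γ (𝓝[≥] 0) (𝓝 0))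
    (hw_nonneg : ∀ τ, 0 ≤ w τ) (hw : Tendsto w atTop (𝓝 0))
    (hiss : ∀ s t : ℝ, 0 ≤ s → s ≤ t →
      ‖e t‖ ≤ β ‖e 0‖ (t - s) + γ (⨆ τ ∈ Icc s t, w τ)) :
    Tendsto e atTop (𝓝 0) := by
  have hhalf : Tendsto (fun t : ℝ => t / 2) atTop atTop := tendsto_id.atTop_div_const two_pos
  have htransient : Tendsto (fun t => β ‖e 0‖ (t - t / 2)) atTop (𝓝 0) :=
    hβ.comp (by simpa only [sub_half] using hhalf)
  have hinput : Tendsto (fun t => γ (⨆ τ ∈ Icc (t / 2) t, w τ)) atTop (𝓝 0) :=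
    hγ.comp (tendsto_biSup_Icc_nhdsGE_zero hw_nonneg hw hhalf)
  refine squeeze_zero_norm' ?_ (by simpa using htransient.add hinput)
  filter_upwards [eventually_ge_atTop 0] with t ht
  exact hiss _ _ (by positivity) (by linarith)

theorem classKL_decay_and_iss_convergence_general (n : ℕ)
    (β : ℝ → ℝ → ℝ) (γ : ℝ → ℝ)
    -- β is class-KL
    (hβ_lim : ∀ r : ℝ, 0 ≤ r → Tendsto (fun t => β r t) atTop (nhds 0))
    -- γ is class-K
    (hγ_cont : ContinuousOn γ (Ici 0))
    (hγ_zero : γ 0 = 0) :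
    (∀ r : ℝ, 0 ≤ r → Tendsto (fun t => β r t) atTop (nhds 0)) ∧
    (∀ (w : ℝ → ℝ) (e : ℝ → EuclideanSpace ℝ (Fin n)),
      Continuous w → (∀ t : ℝ, 0 ≤ w t) → Tendsto w atTop (nhds 0) →
      (∀ s t : ℝ, 0 ≤ s → s ≤ t →
        ‖e t‖ ≤ β ‖e 0‖ (t - s) + γ (⨆ τ ∈ Icc s t, w τ)) →
      Tendsto e atTop (nhds 0)) := by
  have hγ : Tendsto γ (𝓝[≥] 0) (𝓝 0) := by
    simpa only [hγ_zero] using (hγ_cont 0 self_mem_Ici).tendsto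
  exact ⟨hβ_lim, fun w e _ hw_nonneg hw hiss =>
    tendsto_zero_of_iss_estimate (hβ_lim _ (norm_nonneg _)) hγ hw_nonneg hw hiss⟩

/-- for a class-KL β, β(r,·) → 0 for every r ≥ 0, and for a system with
the time-shifted ISS estimate and input w → 0, the state e → 0. -/
theorem classKL_decay_and_iss_convergence (n : ℕ)
    (β : ℝ → ℝ → ℝ) (γ : ℝ → ℝ)
    -- β is class-KL
    (hβ_cont : ∀ t : ℝ, 0 ≤ t → ContinuousOn (fun r => β r t) (Ici 0))
    (hβ_mono : ∀ t : ℝ, 0 ≤ t → StrictMonoOn (fun r => β r t) (Ici 0))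
    (hβ_zero : ∀ t : ℝ, 0 ≤ t → β 0 t = 0)
    (hβ_dec : ∀ r : ℝ, 0 ≤ r → AntitoneOn (fun t => β r t) (Ici 0))
    (hβ_lim : ∀ r : ℝ, 0 ≤ r → Tendsto (fun t => β r t) atTop (nhds 0))
    -- γ is class-K
    (hγ_cont : ContinuousOn γ (Ici 0))
    (hγ_mono : StrictMonoOn γ (Ici 0))
    (hγ_zero : γ 0 = 0) :
    (∀ r : ℝ, 0 ≤ r → Tendsto (fun t => β r t) atTop (nhds 0)) ∧
    (∀ (w : ℝ → ℝ) (e : ℝ → EuclideanSpace ℝ (Fin n)),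
      Continuous w → (∀ t : ℝ, 0 ≤ w t) → Tendsto w atTop (nhds 0) →
      (∀ s t : ℝ, 0 ≤ s → s ≤ t →
        ‖e t‖ ≤ β ‖e 0‖ (t - s) + γ (⨆ τ ∈ Icc s t, w τ)) →
      Tendsto e atTop (nhds 0)) :=
  classKL_decay_and_iss_convergence_general n β γ hβ_lim hγ_cont hγ_zero
end
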